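/- Let $x^* \in \mathbb{R}^2 \setminus \{0\}$ with $\angle x^* = 0$ (i.e., $x^* = (|x^*|, 0)$), and let $x \in \mathbb{R}^2$ with $x \ne x^*$, polar coordinates $(|x|, \angle x)$. Define $r_* = |x - x^*|$ and $\theta_* = \pi - \arcsin\left(\frac{|x|\sin|\angle x|}{r_*}\right)$ if $|x|\cos(\angle x) > |x^*|$, else $\theta_* = \arcsin\left(\frac{|x|\sin|\angle x|}{r_*}\right)$. Then $r_*^2 = |x|^2 + |x^*|^2 - 2|x||x^*|\cos(\angle x)$, and the quantity $|\mathcal{A}| = r_*^2(|\angle x| + \theta_*) - |x^*|^2 |\angle x| + |x||x^*|\sin|\angle x|$ is nonnegative and satisfies $|\mathcal{A}| \le \pi r_*^2$. -/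

import Mathlib

/-!
With `t = |φ|` the angle at the origin of the triangle `0, x^*, x`, the angle `θ_*` is the
angle at `x^*`, i.e. `θ_* = arccos ((a - ρ cos t) / r_*)`. The law of sines gives
`ρ sin t = r_* sin θ_*` and `a sin t = r_* sin (t + θ_*)`, where `π - t - θ_* ≥ 0` is the angle
at `x`. Both bounds then follow from `sin u ≤ u`, `t cos t ≤ sin t` and the triangle inequality.
-/

open Real

/-- A point of the Euclidean plane given by its Cartesian coordinates. -/
noncomputable def pt (a b : ℝ) : EuclideanSpace ℝ (Fin 2) := WithLp.toLp 2 ![a, b]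

theorem norm_pt_sub_pt_sq (p q u v : ℝ) :
    ‖pt p q - pt u v‖ ^ 2 = (p - u) ^ 2 + (q - v) ^ 2 := by
  simp [EuclideanSpace.norm_sq_eq, pt, Fin.sum_univ_two]

theorem norm_polar_sub_pt_sq (a ρ φ : ℝ) :
    ‖pt (ρ * cos φ) (ρ * sin φ) - pt a 0‖ ^ 2 = ρ ^ 2 + a ^ 2 - 2 * ρ * a * cos φ := by
  rw [norm_pt_sub_pt_sq]
  linear_combination ρ ^ 2 * sin_sq_add_cos_sq φ

theorem mul_cos_le_sin {t : ℝ} (ht₀ : 0 ≤ t) (htπ : t ≤ π) : t * cos t ≤ sin t := by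
  rcases le_or_gt (cos t) 0 with hc | hc
  · nlinarith [sin_nonneg_of_nonneg_of_le_pi ht₀ htπ]
  · have ht : t < π / 2 := by
      by_contra! h
      linarith [cos_nonpos_of_pi_div_two_le_of_le h (by linarith)]
    simpa [tan_eq_sin_div_cos, le_div_iff₀ hc] using le_tan ht₀ ht

section LawOfCosines

variable {a b r θ : ℝ}

theorem abs_sub_le_of_law_of_cosines (ha : 0 ≤ a) (hb : 0 ≤ b) (hr : 0 ≤ r)
    (h : r ^ 2 = a ^ 2 + b ^ 2 - 2 * a * b * cos θ) : |a - b| ≤ r :=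
  abs_le_of_sq_le_sq (by nlinarith [cos_le_one θ, mul_nonneg ha hb]) hr

theorem le_add_of_law_of_cosines (ha : 0 ≤ a) (hb : 0 ≤ b)
    (h : r ^ 2 = a ^ 2 + b ^ 2 - 2 * a * b * cos θ) : r ≤ a + b :=
  (le_abs_self r).trans <|
    abs_le_of_sq_le_sq (by nlinarith [neg_one_le_cos θ, mul_nonneg ha hb]) (add_nonneg ha hb)

theorem sub_mul_cos_sq_add_mul_sin_sq (h : r ^ 2 = a ^ 2 + b ^ 2 - 2 * a * b * cos θ) :
    (b - a * cos θ) ^ 2 + (a * sin θ) ^ 2 = r ^ 2 := by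
  linear_combination -h + a ^ 2 * sin_sq_add_cos_sq θ

end LawOfCosines

section ArccosOfCoordinates

variable {x y r : ℝ}

theorem sqrt_one_sub_div_sq (hy : 0 ≤ y) (hr : 0 < r) (h : x ^ 2 + y ^ 2 = r ^ 2) :
    √(1 - (x / r) ^ 2) = y / r := by
  rw [show 1 - (x / r) ^ 2 = (y / r) ^ 2 by field_simp; linarith]
  exact sqrt_sq (div_nonneg hy hr.le)

theorem ite_arcsin_eq_arccos (hy : 0 ≤ y) (hr : 0 < r) (h : x ^ 2 + y ^ 2 = r ^ 2) :
    (if x < 0 then π - arcsin (y / r) else arcsin (y / r)) = arccos (x / r) := by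
  have hsqrt := sqrt_one_sub_div_sq hy hr h
  split_ifs with hx
  · rw [show x / r = -(-x / r) by ring, arccos_neg,
      arccos_eq_arcsin (div_nonneg (neg_nonneg.mpr hx.le) hr.le), neg_div, neg_sq, hsqrt]
  · rw [arccos_eq_arcsin (div_nonneg (not_lt.mp hx) hr.le), hsqrt]

theorem mul_cos_arccos_div (hr : 0 < r) (h : x ^ 2 + y ^ 2 = r ^ 2) :
    r * cos (arccos (x / r)) = x := by
  have hx : |x| ≤ r := abs_le_of_sq_le_sq (by nlinarith [sq_nonneg y]) hr.le
  obtain ⟨hlo, hhi⟩ := abs_le.mp hx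
  rw [cos_arccos (by rw [le_div_iff₀ hr]; linarith) (by rw [div_le_one hr]; exact hhi)]
  field_simp

theorem mul_sin_arccos_div (hy : 0 ≤ y) (hr : 0 < r) (h : x ^ 2 + y ^ 2 = r ^ 2) :
    r * sin (arccos (x / r)) = y := by
  rw [sin_arccos, sqrt_one_sub_div_sq hy hr h]
  field_simp

end ArccosOfCoordinates

section Triangle

variable {a ρ r t : ℝ}

theorem add_arccos_le_pi (ha : 0 ≤ a) (hρ : 0 ≤ ρ) (hr : 0 < r) (ht₀ : 0 ≤ t) (htπ : t ≤ π)
    (hcos : r ^ 2 = ρ ^ 2 + a ^ 2 - 2 * ρ * a * cos t) :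
    t + arccos ((a - ρ * cos t) / r) ≤ π := by
  have hρa := abs_le.mp (abs_sub_le_of_law_of_cosines hρ ha hr.le hcos)
  have hr_le := le_add_of_law_of_cosines hρ ha hcos
  -- `a - c (ρ - r) = ((1 + c)(a - ρ + r) + (1 - c)(a + ρ - r)) / 2` with `|c| ≤ 1`, `|ρ - r| ≤ a`
  have hneg_cos : -cos t ≤ (a - ρ * cos t) / r := by
    rw [le_div_iff₀ hr]
    nlinarith [mul_nonneg (by linarith [neg_one_le_cos t] : 0 ≤ 1 + cos t)
        (by linarith : 0 ≤ a - ρ + r),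
      mul_nonneg (by linarith [cos_le_one t] : 0 ≤ 1 - cos t) (by linarith : 0 ≤ a + ρ - r)]
  calc t + arccos ((a - ρ * cos t) / r) ≤ t + arccos (-cos t) :=
        add_le_add_right (arccos_le_arccos hneg_cos) t
    _ = π := by rw [arccos_neg, arccos_cos ht₀ htπ]; ring

theorem mul_sin_eq_mul_sin_add_arccos (hρ : 0 ≤ ρ) (hr : 0 < r) (ht₀ : 0 ≤ t) (htπ : t ≤ π)
    (hcos : r ^ 2 = ρ ^ 2 + a ^ 2 - 2 * ρ * a * cos t) :
    a * sin t = r * sin (t + arccos ((a - ρ * cos t) / r)) := by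
  have hpyth := sub_mul_cos_sq_add_mul_sin_sq hcos
  have hc := mul_cos_arccos_div hr hpyth
  have hs := mul_sin_arccos_div (mul_nonneg hρ (sin_nonneg_of_nonneg_of_le_pi ht₀ htπ)) hr hpyth
  rw [sin_add]
  linear_combination (-sin t) * hc - cos t * hs

end Triangle

/-- The closed-form area of the lune, with `t = |∠x|` and `β = θ_*`. -/
noncomputable def luneArea (a ρ r t β : ℝ) : ℝ :=
  r ^ 2 * (t + β) - a ^ 2 * t + ρ * a * sin t

section LuneArea

variable {a ρ r t β : ℝ}

theorem luneArea_nonneg (ha : 0 ≤ a) (hρ : 0 ≤ ρ) (hr : 0 ≤ r) (ht₀ : 0 ≤ t) (htπ : t ≤ π)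
    (hβ : 0 ≤ β) (hcos : r ^ 2 = ρ ^ 2 + a ^ 2 - 2 * ρ * a * cos t)
    (hsin : ρ * sin t = r * sin β) : 0 ≤ luneArea a ρ r t β := by
  have hs₀ := sin_nonneg_of_nonneg_of_le_pi ht₀ htπ
  have ha_le : a ≤ ρ + r := by
    linarith [(abs_le.mp (abs_sub_le_of_law_of_cosines hρ ha hr hcos)).1]
  have hρ_sin : ρ * sin t ≤ r * β := hsin ▸ mul_le_mul_of_nonneg_left (sin_le hβ) hr
  have key : (a ^ 2 - r ^ 2) * t ≤ r ^ 2 * β + ρ * a * sin t :=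
    calc (a ^ 2 - r ^ 2) * t = ρ * (2 * a * (t * cos t) - ρ * t) := by rw [hcos]; ring
      _ ≤ ρ * (2 * a * sin t - ρ * sin t) := by
        gcongr
        · exact mul_cos_le_sin ht₀ htπ
        · exact sin_le ht₀
      _ = ρ * sin t * (2 * a - ρ) := by ring
      _ ≤ ρ * sin t * (a + r) := by gcongr; linarith
      _ = r * (ρ * sin t) + ρ * a * sin t := by ring
      _ ≤ r * (r * β) + ρ * a * sin t := by gcongr
      _ = r ^ 2 * β + ρ * a * sin t := by ring
  unfold luneArea
  linarith

theorem luneArea_le_pi_mul_sq (ha : 0 ≤ a) (hρ : 0 ≤ ρ) (hr : 0 ≤ r) (ht₀ : 0 ≤ t)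
    (htπ : t ≤ π) (hβ : t + β ≤ π) (hcos : r ^ 2 = ρ ^ 2 + a ^ 2 - 2 * ρ * a * cos t)
    (hsin : a * sin t = r * sin (t + β)) : luneArea a ρ r t β ≤ π * r ^ 2 := by
  have has₀ : 0 ≤ a * sin t := mul_nonneg ha (sin_nonneg_of_nonneg_of_le_pi ht₀ htπ)
  have hρ_le : ρ ≤ a + r := by
    linarith [(abs_le.mp (abs_sub_le_of_law_of_cosines hρ ha hr hcos)).2]
  have ha_sin : a * sin t ≤ r * (π - (t + β)) := by
    rw [hsin, ← sin_pi_sub]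
    exact mul_le_mul_of_nonneg_left (sin_le (by linarith)) hr
  have key : ρ * (a * sin t) ≤ a ^ 2 * t + r ^ 2 * (π - (t + β)) :=
    calc ρ * (a * sin t) ≤ (a + r) * (a * sin t) := mul_le_mul_of_nonneg_right hρ_le has₀
      _ = a ^ 2 * sin t + r * (a * sin t) := by ring
      _ ≤ a ^ 2 * t + r * (r * (π - (t + β))) := by
        gcongr
        exact sin_le ht₀
      _ = a ^ 2 * t + r ^ 2 * (π - (t + β)) := by ring
  unfold luneArea
  linarith

end LuneArea

/-- Consistency of the lune-area formula of Lemma 2: with `x^* = (a,0)`, `a > 0`, and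
`x = (ρ cos φ, ρ sin φ) ≠ x^*`, the law of cosines holds for `r_* = |x - x^*|`, and the
closed-form area `|𝒜| = r_*²(|φ| + θ_*) - a²|φ| + ρ a sin|φ|` satisfies `0 ≤ |𝒜| ≤ π r_*²`. -/
theorem lune_area_consistency (a ρ φ : ℝ) (ha : 0 < a) (hρ : 0 ≤ ρ)
    (hφ : φ ∈ Set.Ico (-π) π)
    (x : EuclideanSpace ℝ (Fin 2)) (hx : x = pt (ρ * Real.cos φ) (ρ * Real.sin φ))
    (hne : x ≠ pt a 0)
    (rstar : ℝ) (hrstar : rstar = ‖x - pt a 0‖)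
    (θstar : ℝ)
    (hθstar : θstar = if ρ * Real.cos φ > a
      then π - Real.arcsin (ρ * Real.sin |φ| / rstar)
      else Real.arcsin (ρ * Real.sin |φ| / rstar))
    (A : ℝ) (hA : A = rstar^2 * (|φ| + θstar) - a^2 * |φ| + ρ * a * Real.sin |φ|) :
    rstar^2 = ρ^2 + a^2 - 2*ρ*a*Real.cos φ ∧ 0 ≤ A ∧ A ≤ π * rstar^2 := by
  have hr : 0 < rstar := hrstar ▸ norm_pos_iff.mpr (sub_ne_zero.mpr hne)
  have ht₀ : 0 ≤ |φ| := abs_nonneg φ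
  have htπ : |φ| ≤ π := abs_le.mpr ⟨hφ.1, hφ.2.le⟩
  rw [← cos_abs φ] at hθstar ⊢
  have hcos : rstar ^ 2 = ρ ^ 2 + a ^ 2 - 2 * ρ * a * cos |φ| := by
    rw [hrstar, hx, norm_polar_sub_pt_sq, cos_abs]
  have hpyth := sub_mul_cos_sq_add_mul_sin_sq hcos
  have hy : 0 ≤ ρ * sin |φ| := mul_nonneg hρ (sin_nonneg_of_nonneg_of_le_pi ht₀ htπ)
  have hθ : θstar = arccos ((a - ρ * cos |φ|) / rstar) := by
    rw [hθstar, ← ite_arcsin_eq_arccos hy hr hpyth]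
    simp only [gt_iff_lt, sub_neg]
  have hA' : A = luneArea a ρ rstar |φ| θstar := hA
  subst hθ hA'
  exact ⟨hcos,
    luneArea_nonneg ha.le hρ hr.le ht₀ htπ (arccos_nonneg _) hcos
      (mul_sin_arccos_div hy hr hpyth).symm,
    luneArea_le_pi_mul_sq ha.le hρ hr.le ht₀ htπ (add_arccos_le_pi ha.le hρ hr ht₀ htπ hcos) hcos
      (mul_sin_eq_mul_sin_add_arccos hρ hr ht₀ htπ hcos)⟩
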